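/- For every integer K ≥ 2 there exists a finite calibration space X of size 2K − 1 with the uniform distribution, real-valued expert output functions f_1, ..., f_{2K−1} on X, a deterministic top-1 router, and a positive regularization parameter λ, such that: (i) the activation-weighted-conditional-probability (ACP) scores satisfy I_1 = ... = I_K > I_{K+1} = ... = I_{2K−1} > 0, so the independent top-K selection is S_ind = {1,...,K}; (ii) the best linear reconstruction error of the MoE teacher output over S_ind equals (K−1)/(2K−1); and (iii) every size-K subset maximizing the regularized log-determinant objective S ↦ log det(𝒦_S + λ I), built from the importance-weighted kernel 𝒦_ij = √(I_i I_j) · E[f_i(x) f_j(x)], achieves zero linear reconstruction error. -/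

import Mathlib

/-!
Under a deterministic router every confidence factor is `1`, so `I_e = √(E[f_e²])`: the `K` copies
of `1_{a_1, …, a_K}` outscore the specialists, but they span a single function that misses the
`K - 1` points `b_j` on which the teacher equals `1`.

The kernel equals a constant `α` on the copies and `λ` on the diagonal elsewhere, so by the matrix
determinant lemma `det (𝒦_S + λ I) = λ^K 2^s (1 + m α / λ)` for a set `S` with `m` copies and `s`
specialists. Trading a copy for a missing specialist when `m ≥ 2` multiplies this by
`2 (1 + (m - 1) c) / (1 + m c) > 1` (`c = α / λ`), so a maximiser holds every specialist and one
copy, and these experts sum to the teacher.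
-/

open Matrix Finset

/-- Principal submatrix of `K` indexed by a finite set `S`. -/
noncomputable def subK {n : ℕ} (K : Matrix (Fin n) (Fin n) ℝ) (S : Finset (Fin n)) :
    Matrix {x // x ∈ S} {x // x ∈ S} ℝ :=
  K.submatrix (fun i => i.1) (fun j => j.1)

theorem Matrix.det_diagonal_add_vecMulVec {ι K : Type*} [Fintype ι] [DecidableEq ι] [Field K]
    {d : ι → K} (hd : ∀ i, d i ≠ 0) (u v : ι → K) :
    (diagonal d + vecMulVec u v).det = (∏ i, d i) * (1 + ∑ i, u i * v i / d i) := by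
  have hfactor : diagonal d + vecMulVec u v = diagonal d * (1 + vecMulVec (u / d) v) := by
    ext i j
    rcases eq_or_ne i j with rfl | hij
    · simp [vecMulVec_apply, mul_add]
      field_simp [hd i]
    · simp [vecMulVec_apply, hij]
      field_simp [hd i]
  rw [hfactor, det_mul, det_diagonal, vecMulVec_eq Unit, det_one_add_replicateCol_mul_replicateRow]
  congr 2
  simp only [dotProduct, Pi.div_apply]
  exact sum_congr rfl fun i _ => by ring

/- A mixture of `n` experts `f e : Fin n → ℝ` on the calibration space `Fin n` with the uniform
distribution and a deterministic top-1 router `r`: `gate r x e` is the routing probability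
`p^{(e)}(x)`, `routedConfidence r e` the factor `CP_e` of the ACP score. -/
namespace MoE

variable {n : ℕ}

noncomputable def mean (g : Fin n → ℝ) : ℝ := (∑ x, g x) / n

def gate (r : Fin n → Fin n) (x e : Fin n) : ℝ := if r x = e then 1 else 0

def teacher (f : Fin n → Fin n → ℝ) (r : Fin n → Fin n) (x : Fin n) : ℝ :=
  ∑ e, gate r x e * f e x

noncomputable def routedConfidence (r : Fin n → Fin n) (e : Fin n) : ℝ :=
  (∑ x ∈ univ.filter fun x => r x = e, gate r x e) / (#(univ.filter fun x => r x = e) : ℝ)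

noncomputable def acpScore (f : Fin n → Fin n → ℝ) (r : Fin n → Fin n) (e : Fin n) : ℝ :=
  routedConfidence r e * √(mean fun x => f e x ^ 2)

noncomputable def kernel (f : Fin n → Fin n → ℝ) (r : Fin n → Fin n) :
    Matrix (Fin n) (Fin n) ℝ :=
  fun i j => √(acpScore f r i * acpScore f r j) * mean fun x => f i x * f j x

noncomputable def reconError (f : Fin n → Fin n → ℝ) (r : Fin n → Fin n) (S : Finset (Fin n)) :
    ℝ :=
  sInf {y | ∃ a : Fin n → ℝ, y = mean fun x => (∑ e ∈ S, a e * f e x - teacher f r x) ^ 2}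

variable {f : Fin n → Fin n → ℝ} {r : Fin n → Fin n}

theorem teacher_id (x : Fin n) : teacher f id x = f x x := by
  simp [teacher, gate]

theorem routedConfidence_eq_one {e : Fin n} (he : ∃ x, r x = e) : routedConfidence r e = 1 := by
  obtain ⟨x, hx⟩ := he
  have hpos : 0 < #(univ.filter fun x => r x = e) := card_pos.2 ⟨x, by simp [hx]⟩
  have hsum : ∑ x ∈ univ.filter fun x => r x = e, gate r x e = #(univ.filter fun x => r x = e) := by
    rw [card_eq_sum_ones, Nat.cast_sum, Nat.cast_one]
    exact sum_congr rfl fun y hy => if_pos (mem_filter.mp hy).2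
  rw [routedConfidence, hsum, div_self (by exact_mod_cast hpos.ne')]

theorem acpScore_id (e : Fin n) : acpScore f id e = √(mean fun x => f e x ^ 2) := by
  rw [acpScore, routedConfidence_eq_one (r := id) (e := e) ⟨e, rfl⟩, one_mul]

theorem reconError_eq_zero {S : Finset (Fin n)} (a : Fin n → ℝ)
    (ha : ∀ x, ∑ e ∈ S, a e * f e x = teacher f r x) : reconError f r S = 0 := by
  refine IsLeast.csInf_eq ⟨⟨a, ?_⟩, ?_⟩
  · simp [mean, ha]
  · rintro y ⟨b, rfl⟩
    unfold mean
    positivity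

def indicatorExperts (s : Fin n → Finset (Fin n)) : Fin n → Fin n → ℝ :=
  fun e x => if x ∈ s e then 1 else 0

variable {s : Fin n → Finset (Fin n)}

theorem mean_indicatorExperts_mul (i j : Fin n) :
    mean (fun x => indicatorExperts s i x * indicatorExperts s j x) = #(s i ∩ s j) / n := by
  simp only [mean, indicatorExperts, ite_zero_mul_ite_zero, mul_one, sum_boole]
  simp [filter_and]

theorem acpScore_indicatorExperts_id (e : Fin n) :
    acpScore (indicatorExperts s) id e = √(#(s e) / n) := by
  simp only [acpScore_id, sq, mean_indicatorExperts_mul, inter_self]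

theorem kernel_indicatorExperts_id (i j : Fin n) :
    kernel (indicatorExperts s) id i j =
      √(√(#(s i) / n) * √(#(s j) / n)) * (#(s i ∩ s j) / n) := by
  rw [kernel, acpScore_indicatorExperts_id, acpScore_indicatorExperts_id,
    mean_indicatorExperts_mul]

section BlockKernel

variable (p : Fin n → Prop) [DecidablePred p]

def blockKernel (α lam : ℝ) : Matrix (Fin n) (Fin n) ℝ :=
  fun i j => if p i ∧ p j then α else if i = j then lam else 0

theorem subK_blockKernel_add_smul_one (α lam : ℝ) (T : Finset (Fin n)) :
    subK (blockKernel p α lam) T + lam • (1 : Matrix T T ℝ) =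
      diagonal (fun i : T => if p i then lam else 2 * lam) +
        vecMulVec (fun i : T => if p i then α else 0) (fun i : T => if p i then 1 else 0) := by
  ext i j
  rcases eq_or_ne i j with rfl | hij
  · by_cases hi : p i.1 <;> simp [subK, blockKernel, vecMulVec_apply, hi] <;> ring
  · have hij' : i.1 ≠ j.1 := Subtype.coe_ne_coe.mpr hij
    by_cases hi : p i.1 <;> by_cases hj : p j.1 <;>
      simp [subK, blockKernel, vecMulVec_apply, hi, hj, hij, hij']

variable {p}

theorem det_subK_blockKernel_add_smul_one {α lam : ℝ} (hlam : 0 < lam) (T : Finset (Fin n)) :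
    (subK (blockKernel p α lam) T + lam • 1).det =
      lam ^ #T * 2 ^ #(T.filter (¬ p ·)) * (1 + #(T.filter p) * (α / lam)) := by
  rw [subK_blockKernel_add_smul_one,
    det_diagonal_add_vecMulVec fun i => by split_ifs <;> positivity]
  congr 1
  · rw [prod_coe_sort T (fun i => if p i then lam else 2 * lam), prod_ite, prod_const, prod_const,
      mul_pow, ← card_filter_add_card_filter_not (s := T) p, pow_add]
    ring
  · congr 1
    have hterm (i : Fin n) : (if p i then α else 0) * (if p i then 1 else 0) /
        (if p i then lam else 2 * lam) = if p i then α / lam else 0 := by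
      split_ifs <;> simp
    simp only [hterm]
    rw [sum_coe_sort T (fun i => if p i then α / lam else 0), ← sum_filter, sum_const,
      nsmul_eq_mul]

theorem det_subK_blockKernel_add_smul_one_pos {α lam : ℝ} (hα : 0 ≤ α) (hlam : 0 < lam)
    (T : Finset (Fin n)) : 0 < (subK (blockKernel p α lam) T + lam • 1).det := by
  rw [det_subK_blockKernel_add_smul_one hlam]
  positivity

theorem det_subK_blockKernel_lt_det_swap {α lam : ℝ} (hα : 0 ≤ α) (hlam : 0 < lam)
    {S : Finset (Fin n)} {g b : Fin n} (hg : g ∈ S) (hpg : p g) (hb : b ∉ S) (hpb : ¬ p b)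
    (hblock : 2 ≤ #(S.filter p)) :
    (subK (blockKernel p α lam) S + lam • 1).det <
      (subK (blockKernel p α lam) (insert b (S.erase g)) + lam • 1).det := by
  have hb' : b ∉ S.erase g := fun h => hb (mem_of_mem_erase h)
  have hcard : #(insert b (S.erase g)) = #S := by
    rw [card_insert_of_notMem hb', card_erase_of_mem hg, Nat.sub_add_cancel (card_pos.2 ⟨g, hg⟩)]
  have hout : #((insert b (S.erase g)).filter (¬ p ·)) = #(S.filter (¬ p ·)) + 1 := by
    rw [filter_insert, if_pos hpb, filter_erase, erase_eq_of_notMem (by simp [hpg]),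
      card_insert_of_notMem (by simp [hb])]
  have hin : #((insert b (S.erase g)).filter p) + 1 = #(S.filter p) := by
    rw [filter_insert, if_neg hpb, filter_erase, card_erase_add_one (by simp [hg, hpg])]
  rw [det_subK_blockKernel_add_smul_one hlam, det_subK_blockKernel_add_smul_one hlam, hcard, hout,
    pow_succ, ← hin]
  have hm : (1 : ℝ) ≤ #((insert b (S.erase g)).filter p) := by exact_mod_cast (by omega)
  have hc : 0 ≤ α / lam := by positivity
  have hpos : 0 < lam ^ #S * 2 ^ #(S.filter (¬ p ·)) := by positivity
  push_cast
  nlinarith [mul_nonneg (sub_nonneg.2 hm) hc]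

end BlockKernel

end MoE

namespace RedundancyExample

open MoE

variable (k : ℕ)

/-! Points `x < k` play the role of `a_1, …, a_K` and points `x ≥ k` that of `b_2, …, b_K`;
experts `e < k` are the `K` identical indicators of `{a_1, …, a_K}`, expert `e ≥ k` is the
specialist `1_{b_e}`, and the router `id` sends each point to the expert of the same index. -/

def generalists : Finset (Fin (2 * k - 1)) := univ.filter fun e => (e : ℕ) < k

def specialists : Finset (Fin (2 * k - 1)) := univ.filter fun e => ¬ (e : ℕ) < k

def support (e : Fin (2 * k - 1)) : Finset (Fin (2 * k - 1)) :=
  if (e : ℕ) < k then generalists k else {e}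

def expert : Fin (2 * k - 1) → Fin (2 * k - 1) → ℝ := indicatorExperts (support k)

-- the diagonal entry of the kernel at a specialist
noncomputable def lam : ℝ := √(1 / (2 * k - 1 : ℕ)) * (1 / (2 * k - 1 : ℕ))

variable {k}

theorem mem_generalists {e : Fin (2 * k - 1)} : e ∈ generalists k ↔ (e : ℕ) < k := by
  simp [generalists]

theorem mem_specialists {e : Fin (2 * k - 1)} : e ∈ specialists k ↔ ¬ (e : ℕ) < k := by
  simp [specialists]

theorem card_generalists (hk : 1 ≤ k) : #(generalists k) = k := by
  rw [generalists, Fin.card_filter_val_lt]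
  omega

theorem card_specialists (hk : 1 ≤ k) : #(specialists k) = k - 1 := by
  have := card_filter_add_card_filter_not (s := (univ : Finset (Fin (2 * k - 1))))
    fun e => (e : ℕ) < k
  rw [← generalists, ← specialists, card_generalists hk, card_univ, Fintype.card_fin] at this
  omega

theorem cast_two_mul_sub_one (hk : 1 ≤ k) : ((2 * k - 1 : ℕ) : ℝ) = 2 * k - 1 := by
  rw [Nat.cast_sub (by omega)]
  push_cast
  ring

theorem lam_pos (hk : 1 ≤ k) : 0 < lam k := by
  have : (0 : ℝ) < (2 * k - 1 : ℕ) := by exact_mod_cast (by omega)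
  unfold lam
  positivity

theorem expert_apply (e x : Fin (2 * k - 1)) :
    expert k e x = if (e : ℕ) < k then (if (x : ℕ) < k then 1 else 0)
      else (if x = e then 1 else 0) := by
  unfold expert indicatorExperts support
  split_ifs <;> simp_all [mem_generalists]

theorem teacher_expert (x : Fin (2 * k - 1)) : teacher (expert k) id x = 1 := by
  rw [teacher_id, expert_apply]
  split_ifs <;> simp_all

theorem acpScore_expert_of_lt (hk : 1 ≤ k) {e : Fin (2 * k - 1)} (he : (e : ℕ) < k) :
    acpScore (expert k) id e = √(k / (2 * k - 1 : ℕ)) := by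
  rw [expert, acpScore_indicatorExperts_id, support, if_pos he, card_generalists hk]

theorem acpScore_expert_of_not_lt {e : Fin (2 * k - 1)} (he : ¬ (e : ℕ) < k) :
    acpScore (expert k) id e = √(1 / (2 * k - 1 : ℕ)) := by
  rw [expert, acpScore_indicatorExperts_id, support, if_neg he, card_singleton, Nat.cast_one]

theorem acpScore_expert_lt (hk : 2 ≤ k) {i j : Fin (2 * k - 1)} (hi : (i : ℕ) < k)
    (hj : ¬ (j : ℕ) < k) : acpScore (expert k) id j < acpScore (expert k) id i := by
  have hn : (0 : ℝ) < (2 * k - 1 : ℕ) := by exact_mod_cast (by omega)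
  rw [acpScore_expert_of_not_lt hj, acpScore_expert_of_lt (by omega) hi]
  gcongr
  exact_mod_cast (by omega : 1 < k)

theorem acpScore_expert_pos (hk : 1 ≤ k) (e : Fin (2 * k - 1)) : 0 < acpScore (expert k) id e := by
  have hn : (0 : ℝ) < (2 * k - 1 : ℕ) := by exact_mod_cast (by omega)
  have hk' : (0 : ℝ) < k := by exact_mod_cast hk
  by_cases he : (e : ℕ) < k
  · rw [acpScore_expert_of_lt hk he]
    positivity
  · rw [acpScore_expert_of_not_lt he]
    positivity

theorem kernel_expert (hk : 1 ≤ k) :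
    kernel (expert k) id =
      blockKernel (fun e => (e : ℕ) < k) (√(k / (2 * k - 1 : ℕ)) * (k / (2 * k - 1 : ℕ)))
        (lam k) := by
  ext i j
  rw [expert, kernel_indicatorExperts_id, blockKernel, support, support]
  by_cases hi : (i : ℕ) < k <;> by_cases hj : (j : ℕ) < k
  · simp only [hi, hj, and_self, if_true, inter_self, card_generalists hk]
    rw [Real.sqrt_mul_self (Real.sqrt_nonneg _)]
  · have hij : i ≠ j := Fin.ne_of_val_ne (by omega)
    simp [hi, hj, hij, mem_generalists]
  · have hij : i ≠ j := Fin.ne_of_val_ne (by omega)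
    simp [hi, hj, hij, mem_generalists]
  · rcases eq_or_ne i j with rfl | hij
    · simp only [hi, and_self, if_false, if_true, inter_self, card_singleton, Nat.cast_one]
      rw [Real.sqrt_mul_self (Real.sqrt_nonneg _), lam]
    · simp [hi, hj, hij]

theorem sum_generalists_mul_expert (a : Fin (2 * k - 1) → ℝ) (x : Fin (2 * k - 1)) :
    ∑ e ∈ generalists k, a e * expert k e x =
      if (x : ℕ) < k then ∑ e ∈ generalists k, a e else 0 := by
  split_ifs with hx
  · exact sum_congr rfl fun e he => by
      rw [expert_apply, if_pos (mem_generalists.1 he), if_pos hx, mul_one]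
  · exact sum_eq_zero fun e he => by
      rw [expert_apply, if_pos (mem_generalists.1 he), if_neg hx, mul_zero]

theorem mean_sq_error_generalists (hk : 1 ≤ k) (a : Fin (2 * k - 1) → ℝ) :
    (mean fun x => (∑ e ∈ generalists k, a e * expert k e x - teacher (expert k) id x) ^ 2) =
      (k * (∑ e ∈ generalists k, a e - 1) ^ 2 + (k - 1)) / (2 * k - 1) := by
  have hterm (x : Fin (2 * k - 1)) :
      ((if (x : ℕ) < k then ∑ e ∈ generalists k, a e else 0) - 1) ^ 2 =
        if (x : ℕ) < k then (∑ e ∈ generalists k, a e - 1) ^ 2 else 1 := by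
    split_ifs <;> ring
  simp only [mean, sum_generalists_mul_expert, teacher_expert, hterm]
  rw [sum_ite, sum_const, sum_const, ← generalists, ← specialists, card_generalists hk,
    card_specialists hk, cast_two_mul_sub_one hk, nsmul_eq_mul, nsmul_one,
    Nat.cast_sub hk, Nat.cast_one]

theorem reconError_generalists (hk : 1 ≤ k) :
    reconError (expert k) id (generalists k) = (k - 1) / (2 * k - 1) := by
  have hden : (0 : ℝ) < 2 * k - 1 := by
    have : (1 : ℝ) ≤ k := by exact_mod_cast hk
    linarith
  refine IsLeast.csInf_eq ⟨⟨fun _ => 1 / k, ?_⟩, ?_⟩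
  · rw [mean_sq_error_generalists hk, sum_const, card_generalists hk, nsmul_eq_mul,
      mul_one_div_cancel (by exact_mod_cast (by omega : k ≠ 0))]
    ring
  · rintro y ⟨a, rfl⟩
    rw [mean_sq_error_generalists hk]
    gcongr
    have : (0 : ℝ) ≤ k := k.cast_nonneg
    nlinarith [sq_nonneg (∑ e ∈ generalists k, a e - 1)]

theorem specialists_subset_of_maximizes_logDet (hk : 1 ≤ k) {S : Finset (Fin (2 * k - 1))}
    (hS : #S = k)
    (hmax : ∀ T : Finset (Fin (2 * k - 1)), #T = k →
      Real.log (subK (kernel (expert k) id) T + lam k • 1).det ≤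
        Real.log (subK (kernel (expert k) id) S + lam k • 1).det) :
    specialists k ⊆ S := by
  intro b hb
  by_contra hbS
  have hout : #(S.filter fun e : Fin (2 * k - 1) => ¬ (e : ℕ) < k) + 2 ≤ k := by
    have hsub : (S.filter fun e : Fin (2 * k - 1) => ¬ (e : ℕ) < k) ⊆ (specialists k).erase b :=
      fun e he => mem_erase.2 ⟨fun h => hbS (h ▸ (mem_filter.1 he).1),
        mem_specialists.2 (mem_filter.1 he).2⟩
    have := card_le_card hsub
    have hne : 0 < #(specialists k) := card_pos.2 ⟨b, hb⟩
    rw [card_erase_of_mem hb, card_specialists hk] at this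
    rw [card_specialists hk] at hne
    omega
  have hblock : 2 ≤ #(S.filter fun e : Fin (2 * k - 1) => (e : ℕ) < k) := by
    have := card_filter_add_card_filter_not (s := S) fun e : Fin (2 * k - 1) => (e : ℕ) < k
    omega
  obtain ⟨g, hg⟩ := card_pos.1 (by omega : 0 < #(S.filter fun e : Fin (2 * k - 1) => (e : ℕ) < k))
  rw [mem_filter] at hg
  have hcard : #(insert b (S.erase g)) = k := by
    rw [card_insert_of_notMem fun h => hbS (mem_of_mem_erase h), card_erase_of_mem hg.1, hS]
    omega
  have hα : (0 : ℝ) ≤ √(k / (2 * k - 1 : ℕ)) * (k / (2 * k - 1 : ℕ)) := by positivity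
  have hlt := det_subK_blockKernel_lt_det_swap hα (lam_pos hk) hg.1 hg.2 hbS
    (mem_specialists.1 hb) hblock
  have hpos := det_subK_blockKernel_add_smul_one_pos
    (p := fun e : Fin (2 * k - 1) => (e : ℕ) < k) hα (lam_pos hk) S
  rw [← kernel_expert hk] at hlt hpos
  linarith [Real.log_lt_log hpos hlt, hmax _ hcard]

theorem reconError_eq_zero_of_specialists_subset (hk : 1 ≤ k) {S : Finset (Fin (2 * k - 1))}
    (hS : #S = k) (hspec : specialists k ⊆ S) : reconError (expert k) id S = 0 := by
  refine reconError_eq_zero (fun _ => 1) fun x => ?_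
  simp only [one_mul, teacher_expert]
  by_cases hx : (x : ℕ) < k
  · have hone : #(S.filter fun e : Fin (2 * k - 1) => (e : ℕ) < k) = 1 := by
      have hout : S.filter (fun e : Fin (2 * k - 1) => ¬ (e : ℕ) < k) = specialists k :=
        Subset.antisymm (fun e he => mem_specialists.2 (mem_filter.1 he).2)
          fun e he => mem_filter.2 ⟨hspec he, mem_specialists.1 he⟩
      have := card_filter_add_card_filter_not (s := S) fun e : Fin (2 * k - 1) => (e : ℕ) < k
      rw [hout, card_specialists hk] at this
      omega
    have hterm (e : Fin (2 * k - 1)) : expert k e x = if (e : ℕ) < k then 1 else 0 := by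
      rw [expert_apply]
      split_ifs <;> simp_all
    rw [sum_congr rfl fun e _ => hterm e, sum_boole, hone, Nat.cast_one]
  · have hterm (e : Fin (2 * k - 1)) : expert k e x = if x = e then 1 else 0 := by
      rw [expert_apply]
      split_ifs <;> simp_all
    rw [sum_congr rfl fun e _ => hterm e, sum_ite_eq, if_pos (hspec (mem_specialists.2 hx))]

end RedundancyExample

/-- **redundancy counterexample.**  For every integer `K ≥ 2` there exist a
calibration space of size `2K − 1` (here `Fin (2K − 1)` with the uniform distribution),
real-valued expert output functions `f_1, …, f_{2K−1}`, a deterministic top-1 router `r`,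
and a positive regularization parameter `λ`, such that, with
`I_e = CP_e · √(E[f_e²])` the ACP scores, `F_MoE(x) = Σ_e p^{(e)}(x) f_e(x)` the teacher
output, `𝒦_ij = √(I_i I_j)·E[f_i f_j]` the importance-weighted kernel, and
`L(S) = inf_a E[(Σ_{e∈S} a_e f_e(x) − F_MoE(x))²]` the best linear reconstruction error:
(i) `I_1 = ⋯ = I_K > I_{K+1} = ⋯ = I_{2K−1} > 0` (so the independent top-`K` selection is
`S_ind = {1,…,K}`, the first block);
(ii) `L(S_ind) = (K−1)/(2K−1)`;
(iii) every size-`K` subset maximizing `S ↦ log det(𝒦_S + λI)` achieves `L(S) = 0`. -/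
theorem acp_redundancy_counterexample (k : ℕ) (hk : 2 ≤ k) :
    ∃ (f : Fin (2 * k - 1) → Fin (2 * k - 1) → ℝ)
      (r : Fin (2 * k - 1) → Fin (2 * k - 1)) (lam : ℝ),
      0 < lam ∧
        (let n : ℕ := 2 * k - 1
        let Exp : (Fin n → ℝ) → ℝ := fun g => (∑ x, g x) / (n : ℝ)
        let p : Fin n → Fin n → ℝ := fun x e => if r x = e then 1 else 0
        let FMoE : Fin n → ℝ := fun x => ∑ e, p x e * f e x
        let CP : Fin n → ℝ := fun e =>
          (∑ x ∈ univ.filter fun x => r x = e, p x e) /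
            ((univ.filter fun x => r x = e).card : ℝ)
        let I : Fin n → ℝ := fun e => CP e * Real.sqrt (Exp fun x => f e x ^ 2)
        let Kk : Matrix (Fin n) (Fin n) ℝ := fun i j =>
          Real.sqrt (I i * I j) * Exp fun x => f i x * f j x
        let L : Finset (Fin n) → ℝ := fun S =>
          sInf {y : ℝ | ∃ a : Fin n → ℝ,
            y = Exp fun x => (∑ e ∈ S, a e * f e x - FMoE x) ^ 2}
        ((∀ i j : Fin n, (i : ℕ) < k → (j : ℕ) < k → I i = I j) ∧
            (∀ i j : Fin n, k ≤ (i : ℕ) → k ≤ (j : ℕ) → I i = I j) ∧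
            (∀ i j : Fin n, (i : ℕ) < k → k ≤ (j : ℕ) → I j < I i) ∧
            (∀ j : Fin n, k ≤ (j : ℕ) → 0 < I j)) ∧
          L (univ.filter fun e : Fin n => (e : ℕ) < k) =
              ((k : ℝ) - 1) / (2 * (k : ℝ) - 1) ∧
          (∀ S : Finset (Fin n), S.card = k →
            (∀ T : Finset (Fin n), T.card = k →
              Real.log (subK Kk T + lam • 1).det ≤ Real.log (subK Kk S + lam • 1).det) →
            L S = 0)) := by
  open RedundancyExample MoE in
  have hk1 : 1 ≤ k := by omega
  refine ⟨expert k, id, lam k, lam_pos hk1,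
    ⟨fun i j hi hj => ?_, fun i j hi hj => ?_, fun i j hi hj => acpScore_expert_lt hk hi hj.not_gt,
      fun j _ => acpScore_expert_pos hk1 j⟩,
    reconError_generalists hk1, fun S hS hmax => reconError_eq_zero_of_specialists_subset hk1 hS
      (specialists_subset_of_maximizes_logDet hk1 hS hmax)⟩
  · exact (acpScore_expert_of_lt hk1 hi).trans (acpScore_expert_of_lt hk1 hj).symm
  · exact (acpScore_expert_of_not_lt hi.not_gt).trans (acpScore_expert_of_not_lt hj.not_gt).symm
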